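/- arXiv:2103.09919 — 7 statements merged into one kernel-verified Lean document; each statement's English description precedes it below -/
import Mathlib

section
/- For any local hidden variable model, i.e., any probability distribution P(a,b|x,y) = Σ_λ pr(λ)·[a = A_x(λ)]·[b = B_y(λ)] with deterministic response functions A_x, B_y : Λ → {+1,−1}, if P(+,−|A_1,B_0) = 0 and P(−,+|A_0,B_1) = 0, then P(+,+|A_1,B_1) ≤ P(+,+|A_0,B_0). -/
/-- Cabello's nonlocality argument: no local hidden variable model with
`P(+,-|A1,B0) = 0` and `P(-,+|A0,B1) = 0` can have
`P(+,+|A1,B1) > P(+,+|A0,B0)`.  Outcomes are encoded by `Bool`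
(`true` = `+1`, `false` = `-1`); the response functions are deterministic. -/
theorem cabello_local_bound {Λ : Type*} [Fintype Λ]
    (pr : Λ → ℝ) (hpr : ∀ l, 0 ≤ pr l) (hsum : ∑ l, pr l = 1)
    (A0 A1 B0 B1 : Λ → Bool)
    (h1 : ∑ l, (if A1 l = true ∧ B0 l = false then pr l else 0) = 0)
    (h2 : ∑ l, (if A0 l = false ∧ B1 l = true then pr l else 0) = 0) :
    ∑ l, (if A1 l = true ∧ B1 l = true then pr l else 0)
      ≤ ∑ l, (if A0 l = true ∧ B0 l = true then pr l else 0) := by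
  have z1 : ∀ l, (if A1 l = true ∧ B0 l = false then pr l else 0) = 0 := by
    intro l
    refine (Finset.sum_eq_zero_iff_of_nonneg ?_).mp h1 l (Finset.mem_univ l)
    intro i _; split <;> [exact hpr i; rfl]
  have z2 : ∀ l, (if A0 l = false ∧ B1 l = true then pr l else 0) = 0 := by
    intro l
    refine (Finset.sum_eq_zero_iff_of_nonneg ?_).mp h2 l (Finset.mem_univ l)
    intro i _; split <;> [exact hpr i; rfl]
  apply Finset.sum_le_sum
  intro l _
  by_cases h : A1 l = true ∧ B1 l = true
  · simp only [h, if_true, and_self]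
    cases hA : A0 l
    · have := z2 l
      simp [hA, h.2] at this
      simp [this]
    · cases hB : B0 l
      · have := z1 l
        simp [h.1, hB] at this
        simp [this]
      · simp [hA, hB]
  · simp only [h, if_false]
    split <;> [exact hpr l; rfl]
end

section
/- For any local hidden variable model satisfying the relaxed constraints P(+,−|A_1,B_0) ≤ ε and P(−,+|A_0,B_1) ≤ ε for some ε ≥ 0, the degree of success satisfies S = P(+,+|A_1,B_1) − P(+,+|A_0,B_0) ≤ 2ε. -/
/-- Relaxed (non-ideal) Cabello local bound: for any local hidden variable model
with `P(+,-|A1,B0) ≤ ε` and `P(-,+|A0,B1) ≤ ε`, the degree of success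
`S = P(+,+|A1,B1) - P(+,+|A0,B0)` satisfies `S ≤ 2ε`. -/
theorem cabello_local_bound_eps {Λ : Type*} [Fintype Λ]
    (pr : Λ → ℝ) (hpr : ∀ l, 0 ≤ pr l) (hsum : ∑ l, pr l = 1)
    (A0 A1 B0 B1 : Λ → Bool) (ε : ℝ) (hε : 0 ≤ ε)
    (h1 : ∑ l, (if A1 l = true ∧ B0 l = false then pr l else 0) ≤ ε)
    (h2 : ∑ l, (if A0 l = false ∧ B1 l = true then pr l else 0) ≤ ε) :
    ∑ l, (if A1 l = true ∧ B1 l = true then pr l else 0)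
      - ∑ l, (if A0 l = true ∧ B0 l = true then pr l else 0) ≤ 2 * ε := by
  have key : ∑ l, (if A1 l = true ∧ B1 l = true then pr l else 0)
      - ∑ l, (if A0 l = true ∧ B0 l = true then pr l else 0)
      ≤ ∑ l, (if A1 l = true ∧ B0 l = false then pr l else 0)
        + ∑ l, (if A0 l = false ∧ B1 l = true then pr l else 0) := by
    rw [← Finset.sum_sub_distrib, ← Finset.sum_add_distrib]
    apply Finset.sum_le_sum
    intro l _
    have h := hpr l
    rcases A0 l <;> rcases A1 l <;> rcases B0 l <;> rcases B1 l <;> simp <;> linarith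
  linarith
end

section
/- Let |Ψ⟩ = c_00|00⟩ + c_01|01⟩ + c_10|10⟩ + c_11|11⟩ be a normalized two-qubit state, and let |u⁺_{A_1}⟩ = cos(α/2)|0⟩ + e^{iφ} sin(α/2)|1⟩ and |v⁺_{B_1}⟩ = cos(β/2)|0⟩ + e^{iξ} sin(β/2)|1⟩ with 0 < α, β < π. If |Ψ⟩ is orthogonal to |u⁺_{A_1}⟩⊗|1⟩ and to |1⟩⊗|v⁺_{B_1}⟩, then there exist c ∈ [0,1] and δ ∈ [0,2π) such that, up to a global phase, c_11 = c, c_01 = −c·e^{−iφ} tan(α/2), c_10 = −c·e^{−iξ} tan(β/2), and c_00 = e^{iδ}·√(1 − c²(1 + tan²(α/2) + tan²(β/2))). -/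
open Complex Real

/-! Each orthogonality condition is a single linear equation which, since `cos (α / 2) ≠ 0`,
solves `c01` (resp. `c10`) as `c11` times a phase times `-tan (α / 2)`. Writing `c11` in polar
form, its argument becomes the global phase and its modulus the parameter `c`; normalization
then fixes `‖c00‖`, and the argument of `c00` relative to the global phase, reduced modulo
`2π`, is `δ`. -/

lemma eq_neg_mul_exp_mul_tan_of_conj_orthogonal {z w : ℂ} {a φ : ℝ} (ha : Real.cos a ≠ 0)
    (h : (starRingEnd ℂ) z * (Real.cos a : ℂ)
        + (starRingEnd ℂ) w * (Complex.exp (Complex.I * φ) * (Real.sin a : ℂ)) = 0) :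
    z = -w * Complex.exp (-Complex.I * φ) * (Real.tan a : ℂ) := by
  have hconj := congrArg (starRingEnd ℂ) h
  simp only [map_add, map_mul, conj_conj, map_zero, ← exp_conj, conj_I, conj_ofReal] at hconj
  have ha' : (Real.cos a : ℂ) ≠ 0 := ofReal_ne_zero.mpr ha
  rw [Real.tan_eq_sin_div_cos, ofReal_div, mul_div_assoc', eq_div_iff ha']
  linear_combination hconj

lemma norm_neg_mul_exp_mul_ofReal (w : ℂ) (φ t : ℝ) :
    ‖-w * Complex.exp (-Complex.I * φ) * (t : ℂ)‖ = ‖w‖ * |t| := by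
  simp [norm_exp]

lemma exp_I_mul_toIcoMod (θ : ℝ) :
    Complex.exp (Complex.I * toIcoMod Real.two_pi_pos 0 θ) = Complex.exp (Complex.I * θ) := by
  rw [mul_comm, mul_comm I, toIcoMod]
  push_cast
  exact exp_mul_I_periodic.sub_zsmul_eq _

lemma eq_exp_I_mul_norm (z : ℂ) : z = Complex.exp (Complex.I * arg z) * (‖z‖ : ℂ) := by
  rw [mul_comm, mul_comm I]
  exact (norm_mul_exp_arg_mul_I z).symm

lemma exists_relative_phase (z : ℂ) (θ : ℝ) :
    ∃ δ : ℝ, 0 ≤ δ ∧ δ < 2 * Real.pi ∧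
      z = Complex.exp (Complex.I * θ) * (Complex.exp (Complex.I * δ) * (‖z‖ : ℂ)) := by
  obtain ⟨hδ0, hδ⟩ := toIcoMod_mem_Ico' Real.two_pi_pos (arg z - θ)
  refine ⟨_, hδ0, hδ, ?_⟩
  rw [exp_I_mul_toIcoMod, ← mul_assoc, ← Complex.exp_add, ofReal_sub, ← mul_add,
    _root_.add_sub_cancel]
  exact eq_exp_I_mul_norm z

/-- Any normalized two-qubit state orthogonal to `|u⁺_{A₁}⟩⊗|1⟩` and
`|1⟩⊗|v⁺_{B₁}⟩` has, up to a global phase, the Cabello form of Eq. (7). -/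
theorem cabello_state_characterization
    (c00 c01 c10 c11 : ℂ) (α β φ ξ : ℝ)
    (hα : 0 < α) (hα' : α < Real.pi) (hβ : 0 < β) (hβ' : β < Real.pi)
    (hnorm : ‖c00‖ ^ 2 + ‖c01‖ ^ 2
        + ‖c10‖ ^ 2 + ‖c11‖ ^ 2 = 1)
    (horth1 : (starRingEnd ℂ) c01 * (Real.cos (α / 2) : ℂ)
        + (starRingEnd ℂ) c11 * (Complex.exp (Complex.I * φ) * (Real.sin (α / 2) : ℂ)) = 0)
    (horth2 : (starRingEnd ℂ) c10 * (Real.cos (β / 2) : ℂ)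
        + (starRingEnd ℂ) c11 * (Complex.exp (Complex.I * ξ) * (Real.sin (β / 2) : ℂ)) = 0) :
    ∃ (c δ θ : ℝ), 0 ≤ c ∧ c ≤ 1 ∧ 0 ≤ δ ∧ δ < 2 * Real.pi ∧
      c11 = Complex.exp (Complex.I * θ) * (c : ℂ) ∧
      c01 = Complex.exp (Complex.I * θ) *
        (-(c : ℂ) * Complex.exp (-Complex.I * φ) * (Real.tan (α / 2) : ℂ)) ∧
      c10 = Complex.exp (Complex.I * θ) *
        (-(c : ℂ) * Complex.exp (-Complex.I * ξ) * (Real.tan (β / 2) : ℂ)) ∧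
      c00 = Complex.exp (Complex.I * θ) * (Complex.exp (Complex.I * δ) *
        (Real.sqrt (1 - c ^ 2 * (1 + Real.tan (α / 2) ^ 2 + Real.tan (β / 2) ^ 2)) : ℂ)) := by
  have h01 := eq_neg_mul_exp_mul_tan_of_conj_orthogonal
    (cos_pos_of_mem_Ioo ⟨by linarith, by linarith⟩).ne' horth1
  have h10 := eq_neg_mul_exp_mul_tan_of_conj_orthogonal
    (cos_pos_of_mem_Ioo ⟨by linarith, by linarith⟩).ne' horth2
  have hc00 : ‖c00‖ ^ 2 = 1 - ‖c11‖ ^ 2 * (1 + Real.tan (α / 2) ^ 2 + Real.tan (β / 2) ^ 2) := by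
    rw [h01, h10, norm_neg_mul_exp_mul_ofReal, norm_neg_mul_exp_mul_ofReal] at hnorm
    rw [← sq_abs (Real.tan (α / 2)), ← sq_abs (Real.tan (β / 2))]
    linear_combination hnorm
  have hc11 := eq_exp_I_mul_norm c11
  obtain ⟨δ, hδ0, hδ, h00⟩ := exists_relative_phase c00 (arg c11)
  refine ⟨‖c11‖, δ, arg c11, norm_nonneg _, ?_, hδ0, hδ, hc11, ?_, ?_, ?_⟩
  · nlinarith [norm_nonneg c11, sq_nonneg ‖c00‖, sq_nonneg ‖c01‖, sq_nonneg ‖c10‖]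
  · rw [h01]; linear_combination (-Complex.exp (-Complex.I * φ) * Real.tan (α / 2)) * hc11
  · rw [h10]; linear_combination (-Complex.exp (-Complex.I * ξ) * Real.tan (β / 2)) * hc11
  · rwa [← hc00, Real.sqrt_sq (norm_nonneg _)]
end

section
/- For a pure two-qubit state of the Cabello form |Ψ^C⟩ (parametrized by c, δ, α, β, φ, ξ) measured with A_0 = B_0 = σ_z and A_1, B_1 the projective measurements along the Bloch directions with polar angles α, β and azimuthal angles φ, ξ, the degree of success S = P(+,+|A_1,B_1) − P(+,+|A_0,B_0) equals (1/4)[cos α cos β + cos α + cos β − 3 − 2c sin α sin β cos(δ+ξ+φ)·√(1 − c² tan²(α/2) − 2c²/(cos β + 1)) + 2c²(cos α (cos β − 1) + 2 tan²(α/2) − cos β + 2 tan²(β/2) + 1)]. -/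
/-!
Since `tan (θ/2) cos (θ/2) = sin (θ/2)`, the three `c`-components of the Cabello state contribute
`-1, -1, +1` times `c sin (α/2) sin (β/2) e^{i(φ+ξ)}` to the overlap with `u ⊗ v`, so the overlap
is `r cos (α/2) cos (β/2) e^{-iδ} - c sin (α/2) sin (β/2) e^{i(φ+ξ)}`, where `r` is the modulus of
the `|00⟩` amplitude. Its squared norm follows from the law of cosines, and subtracting
`P(+,+|A₀,B₀) = r²` leaves an identity between half-angle expressions, using
`r² = 1 - c² (1 + tan² (α/2) + tan² (β/2))` and `2 / (cos β + 1) = 1 + tan² (β/2)`.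
-/

open Complex Real Matrix

theorem Complex.sq_norm_ofReal_mul_exp_sub (a b x y : ℝ) :
    ‖(a : ℂ) * exp (x * I) - (b : ℂ) * exp (y * I)‖ ^ 2 =
      a ^ 2 + b ^ 2 - 2 * a * b * Real.cos (x - y) := by
  rw [Complex.sq_norm, normSq_apply]
  simp only [sub_re, sub_im, re_ofReal_mul, im_ofReal_mul, exp_ofReal_mul_I_re,
    exp_ofReal_mul_I_im, Real.cos_sub]
  linear_combination a ^ 2 * Real.sin_sq_add_cos_sq x + b ^ 2 * Real.sin_sq_add_cos_sq y

namespace Real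

theorem cos_eq_two_mul_cos_half_sq_sub_one (x : ℝ) : cos x = 2 * cos (x / 2) ^ 2 - 1 := by
  rw [← cos_two_mul, mul_div_cancel₀ _ two_ne_zero]

theorem sin_eq_two_mul_sin_half_mul_cos_half (x : ℝ) :
    sin x = 2 * sin (x / 2) * cos (x / 2) := by
  rw [← sin_two_mul, mul_div_cancel₀ _ two_ne_zero]

theorem cos_half_ne_zero {x : ℝ} (h₀ : -π < x) (h₁ : x < π) : cos (x / 2) ≠ 0 :=
  (cos_pos_of_mem_Ioo ⟨by linarith, by linarith⟩).ne'

theorem tan_sq_mul_cos_sq {x : ℝ} (hx : cos x ≠ 0) : tan x ^ 2 * cos x ^ 2 = 1 - cos x ^ 2 := by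
  rw [← mul_pow, tan_mul_cos hx, sin_sq]

theorem two_div_cos_add_one {x : ℝ} (hx : cos (x / 2) ≠ 0) :
    2 / (cos x + 1) = 1 + tan (x / 2) ^ 2 := by
  rw [← inv_inv (1 + _), inv_one_add_tan_sq hx, cos_eq_two_mul_cos_half_sq_sub_one x]
  field_simp
  ring

end Real

/-- The amplitude `⟨Ψ | u ⊗ v⟩` of a two-qubit state with coefficient matrix `Ψ`. -/
noncomputable def overlap (Ψ : Matrix (Fin 2) (Fin 2) ℂ) (u v : Fin 2 → ℂ) : ℂ :=
  ∑ i, ∑ j, starRingEnd ℂ (Ψ i j) * (u i * v j)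

/-- The Cabello state with an arbitrary `|00⟩` modulus `r`; normalisation forces
`r = √(1 - c² (1 + tan² (α/2) + tan² (β/2)))`. -/
noncomputable def cabelloState (r c δ α β φ ξ : ℝ) : Matrix (Fin 2) (Fin 2) ℂ :=
  !![exp (I * δ) * (r : ℂ), -(c : ℂ) * exp (-I * φ) * (Real.tan (α / 2) : ℂ);
    -(c : ℂ) * exp (-I * ξ) * (Real.tan (β / 2) : ℂ), (c : ℂ)]

/-- The `+` eigenvector of the measurement along the Bloch direction with polar angle `θ` and
azimuth `φ`. -/
noncomputable def blochVector (θ φ : ℝ) : Fin 2 → ℂ :=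
  ![(Real.cos (θ / 2) : ℂ), exp (I * φ) * (Real.sin (θ / 2) : ℂ)]

section Cabello

variable (r c δ α β φ ξ : ℝ)

theorem overlap_cabelloState_blochVector (hα : Real.cos (α / 2) ≠ 0)
    (hβ : Real.cos (β / 2) ≠ 0) :
    overlap (cabelloState r c δ α β φ ξ) (blochVector α φ) (blochVector β ξ) =
      ((r * Real.cos (α / 2) * Real.cos (β / 2) : ℝ) : ℂ) * exp ((-δ : ℝ) * I) -
        ((c * Real.sin (α / 2) * Real.sin (β / 2) : ℝ) : ℂ) * exp ((φ + ξ : ℝ) * I) := by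
  have htα : (Real.tan (α / 2) : ℂ) * Real.cos (α / 2) = Real.sin (α / 2) := by
    exact_mod_cast Real.tan_mul_cos hα
  have htβ : (Real.tan (β / 2) : ℂ) * Real.cos (β / 2) = Real.sin (β / 2) := by
    exact_mod_cast Real.tan_mul_cos hβ
  simp only [overlap, cabelloState, blochVector, Fin.sum_univ_two, of_apply, cons_val',
    cons_val_zero, cons_val_one, empty_val', cons_val_fin_one, map_mul, map_neg, conj_ofReal,
    ← exp_conj, conj_I, neg_mul, mul_neg, neg_neg, mul_comm I, ofReal_mul, ofReal_neg,
    ofReal_add, add_mul, Complex.exp_add]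
  linear_combination -(exp (φ * I) * exp (ξ * I) * c) *
    (Real.sin (β / 2) * htα + Real.sin (α / 2) * htβ)

theorem sq_norm_overlap_cabelloState_blochVector (hα : Real.cos (α / 2) ≠ 0)
    (hβ : Real.cos (β / 2) ≠ 0) :
    ‖overlap (cabelloState r c δ α β φ ξ) (blochVector α φ) (blochVector β ξ)‖ ^ 2 =
      (r * Real.cos (α / 2) * Real.cos (β / 2)) ^ 2 +
        (c * Real.sin (α / 2) * Real.sin (β / 2)) ^ 2 -
        2 * (r * Real.cos (α / 2) * Real.cos (β / 2)) *
          (c * Real.sin (α / 2) * Real.sin (β / 2)) * Real.cos (δ + ξ + φ) := by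
  rw [overlap_cabelloState_blochVector r c δ α β φ ξ hα hβ, Complex.sq_norm_ofReal_mul_exp_sub,
    show -δ - (φ + ξ) = -(δ + ξ + φ) by ring, Real.cos_neg]

theorem norm_cabelloState_zero_zero : ‖cabelloState r c δ α β φ ξ 0 0‖ = |r| := by
  simp [cabelloState, norm_exp_I_mul_ofReal]

end Cabello

theorem cabello_success_qubit_formula_general
    (c δ α β φ ξ : ℝ)
    (hα : 0 < α) (hα' : α < Real.pi) (hβ : 0 < β) (hβ' : β < Real.pi)
    (hfeas : c ^ 2 * (1 + Real.tan (α / 2) ^ 2 + Real.tan (β / 2) ^ 2) ≤ 1) :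
    let Ψ : Matrix (Fin 2) (Fin 2) ℂ :=
      !![Complex.exp (Complex.I * δ) *
            (Real.sqrt (1 - c ^ 2 * (1 + Real.tan (α / 2) ^ 2 + Real.tan (β / 2) ^ 2)) : ℂ),
          -(c : ℂ) * Complex.exp (-Complex.I * φ) * (Real.tan (α / 2) : ℂ);
          -(c : ℂ) * Complex.exp (-Complex.I * ξ) * (Real.tan (β / 2) : ℂ), (c : ℂ)]
    let u : Fin 2 → ℂ := ![(Real.cos (α / 2) : ℂ),
          Complex.exp (Complex.I * φ) * (Real.sin (α / 2) : ℂ)]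
    let v : Fin 2 → ℂ := ![(Real.cos (β / 2) : ℂ),
          Complex.exp (Complex.I * ξ) * (Real.sin (β / 2) : ℂ)]
    let p : ℝ := ‖∑ i, ∑ j, (starRingEnd ℂ) (Ψ i j) * (u i * v j)‖ ^ 2
    let q : ℝ := ‖Ψ 0 0‖ ^ 2
    p - q = (1 / 4) * (Real.cos α * Real.cos β + Real.cos α + Real.cos β - 3
        - 2 * c * Real.sin α * Real.sin β * Real.cos (δ + ξ + φ) *
            Real.sqrt (c ^ 2 * (-Real.tan (α / 2) ^ 2) - 2 * c ^ 2 / (Real.cos β + 1) + 1)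
        + 2 * c ^ 2 * (Real.cos α * (Real.cos β - 1) + 2 * Real.tan (α / 2) ^ 2
            - Real.cos β + 2 * Real.tan (β / 2) ^ 2 + 1)) := by
  intro Ψ u v p q
  have hα₂ := Real.cos_half_ne_zero (by linarith) hα'
  have hβ₂ := Real.cos_half_ne_zero (by linarith) hβ'
  set r := √(1 - c ^ 2 * (1 + Real.tan (α / 2) ^ 2 + Real.tan (β / 2) ^ 2))
  have hr : r ^ 2 = 1 - c ^ 2 * (1 + Real.tan (α / 2) ^ 2 + Real.tan (β / 2) ^ 2) :=
    Real.sq_sqrt (by linarith)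
  have hp : p = _ := sq_norm_overlap_cabelloState_blochVector r c δ α β φ ξ hα₂ hβ₂
  have hq : q = r ^ 2 := by
    rw [← sq_abs, ← norm_cabelloState_zero_zero r c δ α β φ ξ]
    rfl
  have hrad : c ^ 2 * (-Real.tan (α / 2) ^ 2) - 2 * c ^ 2 / (Real.cos β + 1) + 1 = r ^ 2 := by
    rw [hr, mul_comm 2, mul_div_assoc, Real.two_div_cos_add_one hβ₂]
    ring
  rw [hp, hq, hrad, Real.sqrt_sq (Real.sqrt_nonneg _),
    Real.cos_eq_two_mul_cos_half_sq_sub_one α, Real.cos_eq_two_mul_cos_half_sq_sub_one β,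
    Real.sin_eq_two_mul_sin_half_mul_cos_half α, Real.sin_eq_two_mul_sin_half_mul_cos_half β]
  linear_combination (Real.cos (α / 2) ^ 2 * Real.cos (β / 2) ^ 2 - 1) * hr
    - c ^ 2 * Real.cos (β / 2) ^ 2 * Real.tan_sq_mul_cos_sq hα₂
    - c ^ 2 * Real.cos (α / 2) ^ 2 * Real.tan_sq_mul_cos_sq hβ₂
    + c ^ 2 * Real.sin (β / 2) ^ 2 * Real.sin_sq (α / 2)
    + c ^ 2 * (1 - Real.cos (α / 2) ^ 2) * Real.sin_sq (β / 2)

/-- Degree of success of Cabello's argument for the two-qubit Cabello state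
(Eq. (7)) with measurements `A₀ = B₀ = σ_z` and `A₁, B₁` along Bloch
directions `(α,φ)` and `(β,ξ)`: it equals the closed formula of Eq. (8). -/
theorem cabello_success_qubit_formula
    (c δ α β φ ξ : ℝ) (hc : 0 ≤ c) (hc' : c ≤ 1)
    (hα : 0 < α) (hα' : α < Real.pi) (hβ : 0 < β) (hβ' : β < Real.pi)
    (hfeas : c ^ 2 * (1 + Real.tan (α / 2) ^ 2 + Real.tan (β / 2) ^ 2) ≤ 1) :
    let Ψ : Matrix (Fin 2) (Fin 2) ℂ :=
      !![Complex.exp (Complex.I * δ) *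
            (Real.sqrt (1 - c ^ 2 * (1 + Real.tan (α / 2) ^ 2 + Real.tan (β / 2) ^ 2)) : ℂ),
          -(c : ℂ) * Complex.exp (-Complex.I * φ) * (Real.tan (α / 2) : ℂ);
          -(c : ℂ) * Complex.exp (-Complex.I * ξ) * (Real.tan (β / 2) : ℂ), (c : ℂ)]
    let u : Fin 2 → ℂ := ![(Real.cos (α / 2) : ℂ),
          Complex.exp (Complex.I * φ) * (Real.sin (α / 2) : ℂ)]
    let v : Fin 2 → ℂ := ![(Real.cos (β / 2) : ℂ),
          Complex.exp (Complex.I * ξ) * (Real.sin (β / 2) : ℂ)]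
    let p : ℝ := ‖∑ i, ∑ j, (starRingEnd ℂ) (Ψ i j) * (u i * v j)‖ ^ 2
    let q : ℝ := ‖Ψ 0 0‖ ^ 2
    p - q = (1 / 4) * (Real.cos α * Real.cos β + Real.cos α + Real.cos β - 3
        - 2 * c * Real.sin α * Real.sin β * Real.cos (δ + ξ + φ) *
            Real.sqrt (c ^ 2 * (-Real.tan (α / 2) ^ 2) - 2 * c ^ 2 / (Real.cos β + 1) + 1)
        + 2 * c ^ 2 * (Real.cos α * (Real.cos β - 1) + 2 * Real.tan (α / 2) ^ 2
            - Real.cos β + 2 * Real.tan (β / 2) ^ 2 + 1)) :=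
  cabello_success_qubit_formula_general c δ α β φ ξ hα hα' hβ hβ' hfeas
end

section
/- Let Π⁺_0, Π⁻_0, Π⁺_1, Π⁻_1 be orthogonal projections on a finite-dimensional complex Hilbert space H with Π⁺_0 + Π⁻_0 = I and Π⁺_1 + Π⁻_1 = I. Then there exists an orthogonal direct sum decomposition H = ⊕_s H^s with dim H^s ≤ 2 for every s, such that each of the four projections leaves every subspace H^s invariant (i.e., all four projections are simultaneously block-diagonal with blocks of size at most 2). -/
/-!
For idempotents `p` and `q` the operator `w = p q + q p - p - q` commutes with both. Hence `p` and
`w` have a common eigenvector `v` in any nonzero subspace invariant under `p` and `q`, and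
`span {v, q v}` is invariant under `p` and `q`: `q` fixes `q v`, and `p (q v)` is read off from
`w v = μ v`. As the projections are self-adjoint, the orthogonal complement of such a block inside
an invariant subspace is again invariant, so blocks of dimension at most two split off one by one.
-/

open scoped InnerProductSpace

open Module Submodule

theorem IsIdempotentElem.commute_mul_add_mul_sub_sub {R : Type*} [Ring R] {p : R}
    (hp : IsIdempotentElem p) (q : R) : Commute p (p * q + q * p - p - q) := by
  have h : p * p = p := hp
  simp only [Commute, SemiconjBy, mul_add, add_mul, mul_sub, sub_mul, mul_assoc, h]
  rw [← mul_assoc p p, h]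
  abel

namespace Module.End

section Pair

variable {R M : Type*} [CommRing R] [AddCommGroup M] [Module R M]

theorem span_pair_mem_invtSubmodule {p q : End R M} (hq : IsIdempotentElem q) {v : M} {a μ : R}
    (hpv : p v = a • v) (hv : (p * q + q * p - p - q) v = μ • v) :
    span R {v, q v} ∈ p.invtSubmodule ∧ span R {v, q v} ∈ q.invtSubmodule := by
  have hqq : q (q v) = q v := LinearMap.congr_fun hq v
  have hpqv : p (q v) = μ • v - a • q v + a • v + q v := by
    simp only [LinearMap.sub_apply, LinearMap.add_apply, mul_apply, hpv, map_smul] at hv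
    rw [← hv]
    abel
  have hv_mem : v ∈ span R {v, q v} := subset_span (by simp)
  have hqv_mem : q v ∈ span R {v, q v} := subset_span (by simp)
  simp only [mem_invtSubmodule_iff_map_le, map_span_le, Set.forall_mem_insert,
    Set.mem_singleton_iff, forall_eq]
  refine ⟨⟨?_, ?_⟩, hqv_mem, ?_⟩
  · simpa only [hpv] using smul_mem _ a hv_mem
  · rw [hpqv]
    exact add_mem (add_mem (sub_mem (smul_mem _ _ hv_mem) (smul_mem _ _ hqv_mem))
      (smul_mem _ _ hv_mem)) hqv_mem
  · rwa [hqq]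

end Pair

section AlgClosed

variable {K V : Type*} [Field K] [IsAlgClosed K] [AddCommGroup V] [Module K V]
  [FiniteDimensional K V]

theorem exists_hasEigenvector_of_commute [Nontrivial V] {f g : End K V} (h : Commute f g) :
    ∃ a b : K, ∃ v, f.HasEigenvector a v ∧ g.HasEigenvector b v := by
  obtain ⟨a, ha⟩ := exists_eigenvalue f
  have : Nontrivial (f.eigenspace a) := nontrivial_iff_ne_bot.mpr ha
  have hg := mapsTo_genEigenspace_of_comm h a 1
  obtain ⟨b, hb⟩ := exists_eigenvalue (g.restrict hg)
  obtain ⟨v, hv⟩ := hb.exists_hasEigenvector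
  refine ⟨a, b, v, ⟨v.2, by simpa using hv.2⟩, ?_, by simpa using hv.2⟩
  exact mem_eigenspace_iff.mpr (congrArg Subtype.val hv.apply_eq_smul)

theorem exists_hasEigenvector_mem_of_commute {f g : End K V} (h : Commute f g)
    {p : Submodule K V} (hp : p ≠ ⊥) (hfp : p ∈ f.invtSubmodule) (hgp : p ∈ g.invtSubmodule) :
    ∃ a b : K, ∃ v ∈ p, f.HasEigenvector a v ∧ g.HasEigenvector b v := by
  have : Nontrivial p := nontrivial_iff_ne_bot.mpr hp
  obtain ⟨a, b, v, hfv, hgv⟩ :=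
    exists_hasEigenvector_of_commute (LinearMap.restrict_commute h hfp hgp)
  refine ⟨a, b, v, v.2, ⟨?_, by simpa using hfv.2⟩, ⟨?_, by simpa using hgv.2⟩⟩
  · exact mem_eigenspace_iff.mpr (congrArg Subtype.val hfv.apply_eq_smul)
  · exact mem_eigenspace_iff.mpr (congrArg Subtype.val hgv.apply_eq_smul)

theorem exists_le_finrank_le_two_of_isIdempotentElem {p q : End K V} (hp : IsIdempotentElem p)
    (hq : IsIdempotentElem q) {W : Submodule K V} (hW : W ≠ ⊥) (hpW : W ∈ p.invtSubmodule)
    (hqW : W ∈ q.invtSubmodule) :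
    ∃ S ≤ W, S ≠ ⊥ ∧ finrank K S ≤ 2 ∧ S ∈ p.invtSubmodule ∧ S ∈ q.invtSubmodule := by
  classical
  have hwW : W ∈ (p * q + q * p - p - q).invtSubmodule := fun x hx => by
    simp only [mem_comap, LinearMap.sub_apply, LinearMap.add_apply, mul_apply]
    exact sub_mem (sub_mem (add_mem (hpW (hqW hx)) (hqW (hpW hx))) (hpW hx)) (hqW hx)
  obtain ⟨a, μ, v, hvW, hpv, hwv⟩ :=
    exists_hasEigenvector_mem_of_commute (hp.commute_mul_add_mul_sub_sub q) hW hpW hwW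
  obtain ⟨hpS, hqS⟩ := span_pair_mem_invtSubmodule hq hpv.apply_eq_smul hwv.apply_eq_smul
  refine ⟨span K {v, q v}, ?_, ?_, ?_, hpS, hqS⟩
  · simpa [span_le, Set.insert_subset_iff] using ⟨hvW, hqW hvW⟩
  · exact fun h => hpv.2 ((span_eq_bot.mp h) v (by simp))
  · calc finrank K (span K {v, q v})
        ≤ ({v, q v} : Set V).toFinset.card := finrank_span_le_card _
      _ ≤ 2 := by simpa using Finset.card_le_two

end AlgClosed

section Orthogonal

variable {𝕜 E ι : Type*} [RCLike 𝕜] [NormedAddCommGroup E] [InnerProductSpace 𝕜 E]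
  [FiniteDimensional 𝕜 E] {T : ι → End 𝕜 E}

theorem exists_finset_pairwise_isOrtho_sup_eq_of_isSymmetric (hT : ∀ i, (T i).IsSymmetric)
    (P : Submodule 𝕜 E → Prop)
    (hP : ∀ W : Submodule 𝕜 E, W ≠ ⊥ → (∀ i, W ∈ (T i).invtSubmodule) →
      ∃ S ≤ W, S ≠ ⊥ ∧ P S ∧ ∀ i, S ∈ (T i).invtSubmodule)
    (W : Submodule 𝕜 E) (hW : ∀ i, W ∈ (T i).invtSubmodule) :
    ∃ s : Finset (Submodule 𝕜 E), (s : Set (Submodule 𝕜 E)).Pairwise (· ⟂ ·) ∧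
      s.sup id = W ∧ ∀ S ∈ s, P S ∧ ∀ i, S ∈ (T i).invtSubmodule := by
  induction hn : finrank 𝕜 W using Nat.strong_induction_on generalizing W with
  | _ n ih => ?_
  by_cases hW0 : W = ⊥
  · exact ⟨∅, by simp, by simp [hW0], by simp⟩
  obtain ⟨S, hSW, hS0, hPS, hS⟩ := hP W hW0 hW
  have hW' : ∀ i, Sᗮ ⊓ W ∈ (T i).invtSubmodule := fun i =>
    invtSubmodule.inf_mem ((hT i).orthogonalComplement_mem_invtSubmodule (hS i)) (hW i)
  have hlt : finrank 𝕜 ↥(Sᗮ ⊓ W) < n := by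
    have := finrank_add_inf_finrank_orthogonal hSW
    have : 0 < finrank 𝕜 S := finrank_pos_iff.mpr (nontrivial_iff_ne_bot.mpr hS0)
    omega
  obtain ⟨s, hs, hsW, hsP⟩ := ih _ hlt _ hW' rfl
  refine ⟨insert S s, ?_, ?_, ?_⟩
  · rw [Finset.coe_insert]
    refine hs.insert_of_symm fun U hU _ => ?_
    exact isOrtho_comm.mpr (isOrtho_iff_le.mpr
      ((Finset.le_sup (f := id) hU).trans (hsW ▸ inf_le_left)))
  · rw [Finset.sup_insert, id, hsW, sup_orthogonal_inf_of_hasOrthogonalProjection hSW]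
  · exact Finset.forall_mem_insert _ _ _ |>.mpr ⟨⟨hPS, hS⟩, hsP⟩

theorem exists_orthogonalFamily_isInternal_of_isSymmetric (hT : ∀ i, (T i).IsSymmetric)
    (P : Submodule 𝕜 E → Prop)
    (hP : ∀ W : Submodule 𝕜 E, W ≠ ⊥ → (∀ i, W ∈ (T i).invtSubmodule) →
      ∃ S ≤ W, S ≠ ⊥ ∧ P S ∧ ∀ i, S ∈ (T i).invtSubmodule) :
    ∃ (m : ℕ) (V : Fin m → Submodule 𝕜 E),
      OrthogonalFamily 𝕜 (fun i => V i) (fun i => (V i).subtypeₗᵢ) ∧ DirectSum.IsInternal V ∧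
      ∀ i, P (V i) ∧ ∀ j, V i ∈ (T j).invtSubmodule := by
  obtain ⟨s, hs, hstop, hsP⟩ := exists_finset_pairwise_isOrtho_sup_eq_of_isSymmetric hT P hP ⊤
    fun i => invtSubmodule.top_mem (T i)
  let V : Fin s.card → Submodule 𝕜 E := fun i => s.equivFin.symm i
  have hV : OrthogonalFamily 𝕜 (fun i => V i) (fun i => (V i).subtypeₗᵢ) :=
    .of_pairwise fun i j hij => hs (s.equivFin.symm i).2 (s.equivFin.symm j).2
      (Subtype.val_injective.ne (s.equivFin.symm.injective.ne hij))
  have hVtop : ⨆ i, V i = ⊤ := by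
    rw [← hstop, Finset.sup_id_eq_sSup, sSup_eq_iSup']
    exact s.equivFin.symm.iSup_comp (g := ((↑) : s → Submodule 𝕜 E))
  exact ⟨s.card, V, hV,
    DirectSum.isInternal_submodule_of_iSupIndep_of_iSup_eq_top hV.independent hVtop,
    fun i => hsP _ (s.equivFin.symm i).2⟩

end Orthogonal

theorem mem_invtSubmodule_of_add_eq_id {R M : Type*} [Ring R] [AddCommGroup M] [Module R M]
    {f g : End R M} (hfg : f + g = LinearMap.id) {p : Submodule R M}
    (hf : p ∈ f.invtSubmodule) : p ∈ g.invtSubmodule := fun x hx => by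
  have hgx : g x = x - f x := eq_sub_of_add_eq' (LinearMap.congr_fun hfg x)
  simpa [hgx] using p.sub_mem hx (hf hx)

end Module.End

theorem jordan_lemma_two_binary_measurements_general
    {H : Type*} [NormedAddCommGroup H] [InnerProductSpace ℂ H]
    [FiniteDimensional ℂ H]
    (P0p P0m P1p P1m : H →ₗ[ℂ] H)
    (h0p : P0p ∘ₗ P0p = P0p)
    (h1p : P1p ∘ₗ P1p = P1p)
    (h0psym : ∀ x y : H, ⟪P0p x, y⟫_ℂ = ⟪x, P0p y⟫_ℂ)
    (h1psym : ∀ x y : H, ⟪P1p x, y⟫_ℂ = ⟪x, P1p y⟫_ℂ)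
    (hsum0 : P0p + P0m = LinearMap.id) (hsum1 : P1p + P1m = LinearMap.id) :
    ∃ (ι : Type) (_ : Fintype ι) (_ : DecidableEq ι) (V : ι → Submodule ℂ H),
      DirectSum.IsInternal V ∧
      (∀ i j, i ≠ j → ∀ x ∈ V i, ∀ y ∈ V j, ⟪x, y⟫_ℂ = 0) ∧
      (∀ i, Module.finrank ℂ (V i) ≤ 2) ∧
      (∀ i, Submodule.map P0p (V i) ≤ V i ∧ Submodule.map P0m (V i) ≤ V i ∧
            Submodule.map P1p (V i) ≤ V i ∧ Submodule.map P1m (V i) ≤ V i) := by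
  obtain ⟨m, V, hVorth, hVint, hV⟩ :=
    Module.End.exists_orthogonalFamily_isInternal_of_isSymmetric (T := ![P0p, P1p])
      (Fin.forall_fin_two.mpr ⟨h0psym, h1psym⟩) (fun S => finrank ℂ S ≤ 2)
      fun W hW hWinv => by
        obtain ⟨S, hSW, hS0, hS2, hS0p, hS1p⟩ :=
          Module.End.exists_le_finrank_le_two_of_isIdempotentElem h0p h1p hW (hWinv 0) (hWinv 1)
        exact ⟨S, hSW, hS0, hS2, Fin.forall_fin_two.mpr ⟨hS0p, hS1p⟩⟩
  refine ⟨Fin m, inferInstance, inferInstance, V, hVint,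
    fun i j hij x hx y hy => hVorth hij ⟨x, hx⟩ ⟨y, hy⟩, fun i => (hV i).1, fun i => ?_⟩
  have h0 : V i ∈ Module.End.invtSubmodule P0p := (hV i).2 0
  have h1 : V i ∈ Module.End.invtSubmodule P1p := (hV i).2 1
  simp only [← Module.End.mem_invtSubmodule_iff_map_le]
  exact ⟨h0, Module.End.mem_invtSubmodule_of_add_eq_id hsum0 h0, h1,
    Module.End.mem_invtSubmodule_of_add_eq_id hsum1 h1⟩

/-- Jordan/Masanes lemma: two pairs of complementary orthogonal projections on a
finite-dimensional complex Hilbert space are simultaneously block-diagonal with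
blocks of dimension at most 2: there is an internal orthogonal direct sum
decomposition into subspaces of dimension ≤ 2, each invariant under all four
projections. -/
theorem jordan_lemma_two_binary_measurements
    {H : Type*} [NormedAddCommGroup H] [InnerProductSpace ℂ H]
    [FiniteDimensional ℂ H]
    (P0p P0m P1p P1m : H →ₗ[ℂ] H)
    (h0p : P0p ∘ₗ P0p = P0p) (h0m : P0m ∘ₗ P0m = P0m)
    (h1p : P1p ∘ₗ P1p = P1p) (h1m : P1m ∘ₗ P1m = P1m)
    (h0psym : ∀ x y : H, ⟪P0p x, y⟫_ℂ = ⟪x, P0p y⟫_ℂ)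
    (h0msym : ∀ x y : H, ⟪P0m x, y⟫_ℂ = ⟪x, P0m y⟫_ℂ)
    (h1psym : ∀ x y : H, ⟪P1p x, y⟫_ℂ = ⟪x, P1p y⟫_ℂ)
    (h1msym : ∀ x y : H, ⟪P1m x, y⟫_ℂ = ⟪x, P1m y⟫_ℂ)
    (hsum0 : P0p + P0m = LinearMap.id) (hsum1 : P1p + P1m = LinearMap.id) :
    ∃ (ι : Type) (_ : Fintype ι) (_ : DecidableEq ι) (V : ι → Submodule ℂ H),
      DirectSum.IsInternal V ∧
      (∀ i j, i ≠ j → ∀ x ∈ V i, ∀ y ∈ V j, ⟪x, y⟫_ℂ = 0) ∧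
      (∀ i, Module.finrank ℂ (V i) ≤ 2) ∧
      (∀ i, Submodule.map P0p (V i) ≤ V i ∧ Submodule.map P0m (V i) ≤ V i ∧
            Submodule.map P1p (V i) ≤ V i ∧ Submodule.map P1m (V i) ≤ V i) :=
  jordan_lemma_two_binary_measurements_general P0p P0m P1p P1m h0p h1p h0psym h1psym hsum0 hsum1
end

section
/- Define the isometry Φ on a bipartite-plus-ancilla system by Φ|2k, 0⟩ = |2k, 0⟩ and Φ|2k+1, 0⟩ = |2k, 1⟩ for k = 0, 1, 2, …, extended linearly on the span of {|m,0⟩ : m ∈ ℕ}. Then Φ is an isometry on its domain, and for a state of the form |χ⟩_{AB} = ⊕_{i,j} √μ_{ij} |Ψ⟩_{ij} — where |Ψ⟩_{ij} = κ_00 e^{−i(ξ+φ)}|2i,2j⟩ + κ_01 e^{−iφ}|2i,2j+1⟩ + κ_01 e^{−iξ}|2i+1,2j⟩ + κ_11|2i+1,2j+1⟩ with fixed coefficients κ, μ_{ij} ≥ 0, Σ μ_{ij} = 1 — one has (Φ_A ⊗ Φ_B)(|χ⟩_{AB} ⊗ |00⟩_{A'B'}) = |σ⟩_{AB} ⊗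 |Ψ^C⟩_{A'B'}, where |σ⟩_{AB} = Σ_{i,j} √μ_{ij} |2i, 2j⟩ and |Ψ^C⟩_{A'B'} = κ_00 e^{−i(ξ+φ)}|00⟩ + κ_01 e^{−iφ}|01⟩ + κ_01 e^{−iξ}|10⟩ + κ_11|11⟩. -/
open Complex

/-- The rearranging involution `(n, b) ↦ (2*(n/2) + b, n % 2)` on `ℕ × Fin 2`. -/
def swapEquiv : (ℕ × Fin 2) ≃ (ℕ × Fin 2) where
  toFun x := (2 * (x.1 / 2) + (x.2 : ℕ), ⟨x.1 % 2, Nat.mod_lt _ (by norm_num)⟩)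
  invFun x := (2 * (x.1 / 2) + (x.2 : ℕ), ⟨x.1 % 2, Nat.mod_lt _ (by norm_num)⟩)
  left_inv := by
    rintro ⟨n, b⟩
    fin_cases b <;> simp [Prod.ext_iff, Fin.ext_iff] <;> omega
  right_inv := by
    rintro ⟨n, b⟩
    fin_cases b <;> simp [Prod.ext_iff, Fin.ext_iff] <;> omega

/-- The swap-like local isometry of the self-testing proof:
`Φ|2k,0⟩ = |2k,0⟩`, `Φ|2k+1,0⟩ = |2k,1⟩`.  In coefficient form (for states
supported on ancilla `|0⟩`) it reads `(Φ f)(n, b) = f (n + b, 0)` for even `n`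
and `0` for odd `n`.  `Φ` is an isometry on its domain, and applied locally to
`|χ⟩ ⊗ |00⟩` with `|χ⟩ = ⊕ᵢⱼ √μᵢⱼ |Ψ⟩ᵢⱼ` it extracts
`|σ⟩ ⊗ |Ψ^C⟩` with `|σ⟩ = Σᵢⱼ √μᵢⱼ |2i,2j⟩`. -/
theorem cabello_selftest_isometry
    (κ00 κ01 κ11 : ℂ) (φ ξ : ℝ)
    (hκ : κ00 ^ 2 + 2 * κ01 ^ 2 + κ11 ^ 2 = 1)
    (μ : ℕ → ℕ → ℝ) (hμ : ∀ i j, 0 ≤ μ i j) (hμsum : ∑' i : ℕ, ∑' j : ℕ, μ i j = 1) :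
    let Φ : ((ℕ × Fin 2) → ℂ) → ((ℕ × Fin 2) → ℂ) :=
      fun f x => if x.1 % 2 = 0 then f (x.1 + (x.2 : ℕ), 0) else 0
    let ψcoef : Fin 2 → Fin 2 → ℂ := fun a b =>
      if a = 0 ∧ b = 0 then κ00 * Complex.exp (-Complex.I * ((ξ : ℂ) + (φ : ℂ)))
      else if a = 0 ∧ b = 1 then κ01 * Complex.exp (-Complex.I * (φ : ℂ))
      else if a = 1 ∧ b = 0 then κ01 * Complex.exp (-Complex.I * (ξ : ℂ))
      else κ11
    -- the state |χ⟩ = ⊕ᵢⱼ √μᵢⱼ |Ψ⟩ᵢⱼ, as a coefficient function on ℕ × ℕ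
    let χ : ℕ × ℕ → ℂ := fun mn =>
      (Real.sqrt (μ (mn.1 / 2) (mn.2 / 2)) : ℂ) *
        ψcoef (⟨mn.1 % 2, Nat.mod_lt _ (by norm_num)⟩ : Fin 2)
              (⟨mn.2 % 2, Nat.mod_lt _ (by norm_num)⟩ : Fin 2)
    -- Φ_A ⊗ Φ_B acting on coefficient functions of the joint system
    let Φ2 : (((ℕ × Fin 2) × (ℕ × Fin 2)) → ℂ) → (((ℕ × Fin 2) × (ℕ × Fin 2)) → ℂ) :=
      fun G z =>
        if z.1.1 % 2 = 0 ∧ z.2.1 % 2 = 0 then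
          G ((z.1.1 + (z.1.2 : ℕ), 0), (z.2.1 + (z.2.2 : ℕ), 0))
        else 0
    -- Φ is an isometry on its domain (states supported on ancilla |0⟩)
    (∀ f : (ℕ × Fin 2) → ℂ, (∀ n : ℕ, f (n, 1) = 0) →
        ∑' x : ℕ × Fin 2, ‖Φ f x‖ ^ 2 = ∑' x : ℕ × Fin 2, ‖f x‖ ^ 2) ∧
    -- (Φ_A ⊗ Φ_B)(|χ⟩ ⊗ |00⟩) = |σ⟩ ⊗ |Ψ^C⟩
    (Φ2 (fun z => (if z.1.2 = 0 ∧ z.2.2 = 0 then 1 else 0) * χ (z.1.1, z.2.1))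
      = fun z =>
          (if z.1.1 % 2 = 0 ∧ z.2.1 % 2 = 0 then
              (Real.sqrt (μ (z.1.1 / 2) (z.2.1 / 2)) : ℂ)
            else 0) * ψcoef z.1.2 z.2.2) := by
  intro Φ ψcoef χ Φ2
  constructor
  · intro f hf
    rw [← swapEquiv.tsum_eq (fun x => ‖Φ f x‖ ^ 2)]
    congr 1
    funext x
    obtain ⟨n, b⟩ := x
    have key : Φ f (swapEquiv (n, b)) = f (n, b) := by
      show Φ f (2 * (n / 2) + (b : ℕ), ⟨n % 2, _⟩) = f (n, b)
      fin_cases b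
      · show (if (2 * (n / 2) + 0) % 2 = 0 then
            f (2 * (n / 2) + 0 + (n % 2), 0) else 0) = f (n, 0)
        have h1 : (2 * (n / 2) + 0) % 2 = 0 := by omega
        have h2 : 2 * (n / 2) + 0 + n % 2 = n := by omega
        rw [if_pos h1, h2]
      · show (if (2 * (n / 2) + 1) % 2 = 0 then
            f (2 * (n / 2) + 1 + (n % 2), 0) else 0) = f (n, 1)
        have h1 : ¬ (2 * (n / 2) + 1) % 2 = 0 := by omega
        rw [if_neg h1, hf n]
    rw [key]
  · funext z
    obtain ⟨⟨m, a⟩, ⟨n, b⟩⟩ := z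
    simp only [Φ2, χ]
    by_cases h : m % 2 = 0 ∧ n % 2 = 0
    · rw [if_pos h, if_pos h, if_pos ⟨trivial, trivial⟩, one_mul]
      have hma : (m + (a : ℕ)) / 2 = m / 2 := by
        have := a.isLt; omega
      have hnb : (n + (b : ℕ)) / 2 = n / 2 := by
        have := b.isLt; omega
      have hA : (⟨(m + (a : ℕ)) % 2, Nat.mod_lt _ (by norm_num)⟩ : Fin 2) = a := by
        apply Fin.ext
        have := a.isLt
        simp only []
        omega
      have hB : (⟨(n + (b : ℕ)) % 2, Nat.mod_lt _ (by norm_num)⟩ : Fin 2) = b := by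
        apply Fin.ext
        have := b.isLt
        simp only []
        omega
      rw [hma, hnb, hA, hB]
    · rw [if_neg h, if_neg h, zero_mul]
end

section
/- If a bipartite state |Ψ⟩ ∈ ℂ²⊗ℂ² with real nonnegative Schmidt-like success value achieves S = p − q > 0 in Cabello's test with projective measurements, then |Ψ⟩ is entangled (not a product state). -/
/-!
For a product state `Ψ = a ⊗ b` every amplitude factorizes, `⟨Ψ|u ⊗ v⟩ = ⟨a|u⟩⟨b|v⟩`. If
`p > q ≥ 0` then `⟨a|u₁⟩` and `⟨b|v₁⟩` are nonzero, so the two zero constraints force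
`⟨b|v₀'⟩ = 0` and `⟨a|u₀'⟩ = 0`: `a` and `b` lie along `u₀` and `v₀`. By Parseval
`|⟨a|u₀⟩| = ‖a‖` and `|⟨b|v₀⟩| = ‖b‖`, while Cauchy–Schwarz gives `|⟨a|u₁⟩| ≤ ‖a‖` and
`|⟨b|v₁⟩| ≤ ‖b‖`; hence `p ≤ q`.
-/

open scoped InnerProductSpace

section InnerProductSpace

variable {𝕜 E F : Type*} [RCLike 𝕜] [NormedAddCommGroup E] [InnerProductSpace 𝕜 E]
  [NormedAddCommGroup F] [InnerProductSpace 𝕜 F]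

theorem norm_inner_eq_norm_of_inner_eq_zero (hE : Module.finrank 𝕜 E = 2) {u u' x : E}
    (huu' : Orthonormal 𝕜 ![u, u']) (hx : ⟪x, u'⟫_𝕜 = 0) : ‖⟪x, u⟫_𝕜‖ = ‖x‖ := by
  have : FiniteDimensional 𝕜 E := Module.finite_of_finrank_eq_succ hE
  let b := (basisOfOrthonormalOfCardEqFinrank huu' (by simp [hE])).toOrthonormalBasis
    (by simpa using huu')
  simpa [b, Fin.sum_univ_two, hx] using b.sum_sq_norm_inner_left x

theorem norm_inner_mul_inner_le_of_cabello (hE : Module.finrank 𝕜 E = 2)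
    (hF : Module.finrank 𝕜 F = 2) {a u₀ u₀' u₁ : E} {b v₀ v₀' v₁ : F}
    (hu₀ : Orthonormal 𝕜 ![u₀, u₀']) (hu₁ : ‖u₁‖ = 1)
    (hv₀ : Orthonormal 𝕜 ![v₀, v₀']) (hv₁ : ‖v₁‖ = 1)
    (hz₁ : ⟪a, u₁⟫_𝕜 * ⟪b, v₀'⟫_𝕜 = 0) (hz₂ : ⟪a, u₀'⟫_𝕜 * ⟪b, v₁⟫_𝕜 = 0) :
    ‖⟪a, u₁⟫_𝕜 * ⟪b, v₁⟫_𝕜‖ ≤ ‖⟪a, u₀⟫_𝕜 * ⟪b, v₀⟫_𝕜‖ := by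
  by_cases hp : ⟪a, u₁⟫_𝕜 * ⟪b, v₁⟫_𝕜 = 0
  · rw [hp, norm_zero]
    positivity
  obtain ⟨ha, hb⟩ := mul_ne_zero_iff.mp hp
  have hau₀' : ⟪a, u₀'⟫_𝕜 = 0 := (mul_eq_zero.mp hz₂).resolve_right hb
  have hbv₀' : ⟪b, v₀'⟫_𝕜 = 0 := (mul_eq_zero.mp hz₁).resolve_left ha
  rw [norm_mul, norm_mul, norm_inner_eq_norm_of_inner_eq_zero hE hu₀ hau₀',
    norm_inner_eq_norm_of_inner_eq_zero hF hv₀ hbv₀']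
  have hau₁ : ‖⟪a, u₁⟫_𝕜‖ ≤ ‖a‖ := by simpa [hu₁] using norm_inner_le_norm (𝕜 := 𝕜) a u₁
  have hbv₁ : ‖⟪b, v₁⟫_𝕜‖ ≤ ‖b‖ := by simpa [hv₁] using norm_inner_le_norm (𝕜 := 𝕜) b v₁
  exact mul_le_mul hau₁ hbv₁ (norm_nonneg _) (norm_nonneg _)

end InnerProductSpace

section Coordinates

variable {ι κ : Type*} [Fintype ι] [Fintype κ]

theorem EuclideanSpace.inner_toLp_eq_sum (x y : ι → ℂ) :
    ⟪WithLp.toLp 2 x, WithLp.toLp 2 y⟫_ℂ = ∑ i, starRingEnd ℂ (x i) * y i := by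
  simp [EuclideanSpace.inner_toLp_toLp, dotProduct, mul_comm]

theorem EuclideanSpace.norm_toLp_eq_one {x : ι → ℂ} (hx : ∑ i, ‖x i‖ ^ 2 = 1) :
    ‖WithLp.toLp 2 x‖ = 1 := by
  rw [← pow_eq_one_iff_of_nonneg (norm_nonneg _) two_ne_zero, EuclideanSpace.norm_sq_eq]
  exact hx

theorem EuclideanSpace.orthonormal_toLp_pair {x y : ι → ℂ} (hx : ∑ i, ‖x i‖ ^ 2 = 1)
    (hy : ∑ i, ‖y i‖ ^ 2 = 1) (hxy : ∑ i, starRingEnd ℂ (x i) * y i = 0) :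
    Orthonormal ℂ ![WithLp.toLp 2 x, WithLp.toLp 2 y] := by
  simp [orthonormal_vecCons_iff, norm_toLp_eq_one, hx, hy, inner_toLp_eq_sum, hxy]

theorem sum_sum_conj_mul_mul_eq_inner_mul_inner (a u : ι → ℂ) (b v : κ → ℂ) :
    ∑ i, ∑ j, starRingEnd ℂ (a i * b j) * (u i * v j) =
      ⟪WithLp.toLp 2 a, WithLp.toLp 2 u⟫_ℂ * ⟪WithLp.toLp 2 b, WithLp.toLp 2 v⟫_ℂ := by
  simp only [EuclideanSpace.inner_toLp_eq_sum, Finset.sum_mul_sum, map_mul]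
  exact Finset.sum_congr rfl fun i _ => Finset.sum_congr rfl fun j _ => by ring

end Coordinates

open EuclideanSpace in
theorem cabello_success_implies_entangled_general
    (Ψ : Matrix (Fin 2) (Fin 2) ℂ)
    (u0 u0' u1 v0 v0' v1 : Fin 2 → ℂ)
    -- each measurement is given by an orthonormal basis (+ and − eigenvectors)
    (hu0 : ∑ i, ‖(u0 i)‖ ^ 2 = 1) (hu0' : ∑ i, ‖(u0' i)‖ ^ 2 = 1)
    (hu0orth : ∑ i, (starRingEnd ℂ) (u0 i) * u0' i = 0)
    (hu1 : ∑ i, ‖(u1 i)‖ ^ 2 = 1)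
    (hv0 : ∑ i, ‖(v0 i)‖ ^ 2 = 1) (hv0' : ∑ i, ‖(v0' i)‖ ^ 2 = 1)
    (hv0orth : ∑ i, (starRingEnd ℂ) (v0 i) * v0' i = 0)
    (hv1 : ∑ i, ‖(v1 i)‖ ^ 2 = 1)
    -- the Cabello zero constraints  P(+,-|A₁,B₀) = 0  and  P(-,+|A₀,B₁) = 0
    (hz1 : ‖(∑ i, ∑ j, (starRingEnd ℂ) (Ψ i j) * (u1 i * v0' j))‖ ^ 2 = 0)
    (hz2 : ‖(∑ i, ∑ j, (starRingEnd ℂ) (Ψ i j) * (u0' i * v1 j))‖ ^ 2 = 0)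
    -- success  p > q
    (hpq : ‖(∑ i, ∑ j, (starRingEnd ℂ) (Ψ i j) * (u0 i * v0 j))‖ ^ 2
         < ‖(∑ i, ∑ j, (starRingEnd ℂ) (Ψ i j) * (u1 i * v1 j))‖ ^ 2) :
    ¬ ∃ (ψA ψB : Fin 2 → ℂ), ∀ i j, Ψ i j = ψA i * ψB j := by
  rintro ⟨a, b, hab⟩
  simp only [hab, sum_sum_conj_mul_mul_eq_inner_mul_inner, sq_eq_zero_iff, norm_eq_zero]
    at hz1 hz2 hpq
  have hp_le_q := norm_inner_mul_inner_le_of_cabello (finrank_euclideanSpace_fin (𝕜 := ℂ))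
    (finrank_euclideanSpace_fin (𝕜 := ℂ)) (orthonormal_toLp_pair hu0 hu0' hu0orth)
    (norm_toLp_eq_one hu1) (orthonormal_toLp_pair hv0 hv0' hv0orth) (norm_toLp_eq_one hv1) hz1 hz2
  exact hpq.not_ge (pow_le_pow_left₀ (norm_nonneg _) hp_le_q 2)

/-- Any two-qubit state passing Cabello's test (i.e., satisfying both zero
constraints and `p > q` for some projective measurements) is entangled. -/
theorem cabello_success_implies_entangled
    (Ψ : Matrix (Fin 2) (Fin 2) ℂ)
    (hnorm : ∑ i, ∑ j, ‖(Ψ i j)‖ ^ 2 = 1)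
    (u0 u0' u1 u1' v0 v0' v1 v1' : Fin 2 → ℂ)
    -- each measurement is given by an orthonormal basis (+ and − eigenvectors)
    (hu0 : ∑ i, ‖(u0 i)‖ ^ 2 = 1) (hu0' : ∑ i, ‖(u0' i)‖ ^ 2 = 1)
    (hu0orth : ∑ i, (starRingEnd ℂ) (u0 i) * u0' i = 0)
    (hu1 : ∑ i, ‖(u1 i)‖ ^ 2 = 1) (hu1' : ∑ i, ‖(u1' i)‖ ^ 2 = 1)
    (hu1orth : ∑ i, (starRingEnd ℂ) (u1 i) * u1' i = 0)
    (hv0 : ∑ i, ‖(v0 i)‖ ^ 2 = 1) (hv0' : ∑ i, ‖(v0' i)‖ ^ 2 = 1)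
    (hv0orth : ∑ i, (starRingEnd ℂ) (v0 i) * v0' i = 0)
    (hv1 : ∑ i, ‖(v1 i)‖ ^ 2 = 1) (hv1' : ∑ i, ‖(v1' i)‖ ^ 2 = 1)
    (hv1orth : ∑ i, (starRingEnd ℂ) (v1 i) * v1' i = 0)
    -- the Cabello zero constraints  P(+,-|A₁,B₀) = 0  and  P(-,+|A₀,B₁) = 0
    (hz1 : ‖(∑ i, ∑ j, (starRingEnd ℂ) (Ψ i j) * (u1 i * v0' j))‖ ^ 2 = 0)
    (hz2 : ‖(∑ i, ∑ j, (starRingEnd ℂ) (Ψ i j) * (u0' i * v1 j))‖ ^ 2 = 0)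
    -- success  p > q
    (hpq : ‖(∑ i, ∑ j, (starRingEnd ℂ) (Ψ i j) * (u0 i * v0 j))‖ ^ 2
         < ‖(∑ i, ∑ j, (starRingEnd ℂ) (Ψ i j) * (u1 i * v1 j))‖ ^ 2) :
    ¬ ∃ (ψA ψB : Fin 2 → ℂ), ∀ i j, Ψ i j = ψA i * ψB j :=
  cabello_success_implies_entangled_general Ψ u0 u0' u1 v0 v0' v1 hu0 hu0' hu0orth hu1 hv0 hv0'
    hv0orth hv1 hz1 hz2 hpq
end
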